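/- (Universal ultrafilter lemma.) Let P : Cᵒᵖ → BoolAlg be a Boolean doctrine over a category C with finite products, let (F_X)_{X ∈ C} be a universal filter for P and (I_X)_{X ∈ C} a universal ideal for P such that F_X ∩ I_X = ∅ for all X ∈ C. Then there is a universal ultrafilter (G_X)_{X ∈ C} for P such that, for every X ∈ C, F_X ⊆ G_X and G_X ∩ I_X = ∅. -/

import Mathlib

open CategoryTheory CategoryTheory.Limits Opposite

universe w v u v₁ u₁ v₂ u₂ v₃ u₃

namespace BooleanDoctrine

/-- Elements of a Boolean algebra in the category `BoolAlg` can be acted on by morphisms. -/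
instance (X Y : BoolAlg) : FunLike (X ⟶ Y) X Y :=
  { coe := fun f => f.hom
    coe_injective := fun _ _ h => BoolAlg.Hom.ext (DFunLike.coe_injective h) }

/-- A filter of a Boolean algebra: contains `⊤`, closed under binary meets, upward closed. -/
def IsBAFilter {A : Type*} [BooleanAlgebra A] (F : Set A) : Prop :=
  (⊤ : A) ∈ F ∧ (∀ a b : A, a ∈ F → b ∈ F → a ⊓ b ∈ F) ∧ ∀ a b : A, a ∈ F → a ≤ b → b ∈ F

/-- The fiber of a Boolean doctrine at an object of the base category. -/
abbrev fiber {C : Type u₁} [Category.{v₁} C] (P : Cᵒᵖ ⥤ BoolAlg.{w}) (X : C) : Type w :=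
  P.obj (op X)

/-- A universal filter for a Boolean doctrine `P : Cᵒᵖ ⥤ BoolAlg`. -/
def IsUniversalFilter {C : Type u₁} [Category.{v₁} C] [HasFiniteProducts C]
    (P : Cᵒᵖ ⥤ BoolAlg.{w}) (F : ∀ X : C, Set (P.obj (op X))) : Prop :=
  (∀ (X Y : C) (f : X ⟶ Y) (α : P.obj (op Y)), α ∈ F Y → P.map f.op α ∈ F X) ∧
    ∀ X : C, IsBAFilter (F X)

/-- A universal ideal for a Boolean doctrine `P : Cᵒᵖ ⥤ BoolAlg`. -/
def IsUniversalIdeal {C : Type u₁} [Category.{v₁} C] [HasFiniteProducts C]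
    (P : Cᵒᵖ ⥤ BoolAlg.{w}) (I : ∀ X : C, Set (P.obj (op X))) : Prop :=
  (∀ (X Y : C) (m : ℕ) (f : Fin m → (X ⟶ Y)) (α : P.obj (op Y)),
      (Finset.univ.inf fun j => P.map (f j).op α) ∈ I X → α ∈ I Y) ∧
    (∀ (X : C) (a b : P.obj (op X)), a ≤ b → b ∈ I X → a ∈ I X) ∧
    (∀ (X₁ X₂ : C) (α₁ : P.obj (op X₁)) (α₂ : P.obj (op X₂)), α₁ ∈ I X₁ → α₂ ∈ I X₂ →
      P.map (prod.fst : X₁ ⨯ X₂ ⟶ X₁).op α₁ ⊔ P.map (prod.snd : X₁ ⨯ X₂ ⟶ X₂).op α₂ ∈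
        I (X₁ ⨯ X₂)) ∧
    (⊥ : P.obj (op (⊤_ C))) ∈ I (⊤_ C)

/-- A universal ultrafilter for a Boolean doctrine `P : Cᵒᵖ ⥤ BoolAlg`. -/
def IsUniversalUltrafilter {C : Type u₁} [Category.{v₁} C] [HasFiniteProducts C]
    (P : Cᵒᵖ ⥤ BoolAlg.{w}) (F : ∀ X : C, Set (P.obj (op X))) : Prop :=
  (∀ (X Y : C) (f : X ⟶ Y) (α : P.obj (op Y)), α ∈ F Y → P.map f.op α ∈ F X) ∧
    (∀ X : C, IsBAFilter (F X)) ∧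
    (∀ (X₁ X₂ : C) (α₁ : P.obj (op X₁)) (α₂ : P.obj (op X₂)),
      P.map (prod.fst : X₁ ⨯ X₂ ⟶ X₁).op α₁ ⊔ P.map (prod.snd : X₁ ⨯ X₂ ⟶ X₂).op α₂ ∈
          F (X₁ ⨯ X₂) →
        α₁ ∈ F X₁ ∨ α₂ ∈ F X₂) ∧
    (⊥ : P.obj (op (⊤_ C))) ∉ F (⊤_ C)

/-- Richness of a Boolean doctrine with respect to a family of subsets of the fibers. -/
def IsRich {C : Type u₁} [Category.{v₁} C] [HasFiniteProducts C]
    (P : Cᵒᵖ ⥤ BoolAlg.{w}) (F : ∀ X : C, Set (P.obj (op X))) : Prop :=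
  ∀ (X : C) (α : P.obj (op X)), α ∉ F X → ∃ c : (⊤_ C) ⟶ X, P.map c.op α ∉ F (⊤_ C)

/-- The failure of the "universal closure" of `a` witnessed by a constant `c : ⊤ ⟶ X`. -/
def IsRichAt {C : Type u₁} [Category.{v₁} C] [HasFiniteProducts C]
    (P : Cᵒᵖ ⥤ BoolAlg.{w}) (F : ∀ X : C, Set (P.obj (op X)))
    (X : C) (a : P.obj (op X)) : Prop :=
  ∃ c : (⊤_ C) ⟶ X, P.map c.op a ∉ F (⊤_ C)

/-- The universal filter generated by a family of subsets of the fibers: the intersection of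
all universal filters containing the family componentwise. -/
def genUnivFilter {C : Type u₁} [Category.{v₁} C] [HasFiniteProducts C]
    (P : Cᵒᵖ ⥤ BoolAlg.{w}) (A : ∀ X : C, Set (P.obj (op X))) :
    ∀ X : C, Set (P.obj (op X)) := fun X =>
  {φ | ∀ G : ∀ X' : C, Set (P.obj (op X')),
    IsUniversalFilter P G → (∀ X', A X' ⊆ G X') → φ ∈ G X}

/-- The universal ideal generated by a family of subsets of the fibers: the intersection of
all universal ideals containing the family componentwise. -/
def genUnivIdeal {C : Type u₁} [Category.{v₁} C] [HasFiniteProducts C]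
    (P : Cᵒᵖ ⥤ BoolAlg.{w}) (A : ∀ X : C, Set (P.obj (op X))) :
    ∀ X : C, Set (P.obj (op X)) := fun X =>
  {φ | ∀ J : ∀ X' : C, Set (P.obj (op X')),
    IsUniversalIdeal P J → (∀ X', A X' ⊆ J X') → φ ∈ J X}

/-- The family of subsets of the fibers placing the element `α i` in the component `Y i`. -/
def familyOfPoints {C : Type u₁} [Category.{v₁} C] (P : Cᵒᵖ ⥤ BoolAlg.{w}) {ι : Type u₃}
    (Y : ι → C) (α : ∀ i, P.obj (op (Y i))) : ∀ X : C, Set (P.obj (op X)) := fun X =>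
  {a | ∃ (i : ι) (h : Y i = X), a = P.map (eqToHom h.symm).op (α i)}

/-- The subsets doctrine, sending a set to its powerset Boolean algebra and a function to
its preimage map. -/
def subsetsDoctrine : (Type v)ᵒᵖ ⥤ BoolAlg.{v} where
  obj X := BoolAlg.of (Set X.unop)
  map f := BoolAlg.ofHom
    { toFun := fun S => f.unop ⁻¹' S
      map_sup' := fun _ _ => rfl
      map_inf' := fun _ _ => rfl
      map_top' := rfl
      map_bot' := rfl }
  map_id _ := rfl
  map_comp _ _ := rfl

/-- A Boolean doctrine morphism: a finite-product-preserving functor together with a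
natural transformation. -/
structure DoctrineHom {C : Type u₁} [Category.{v₁} C] {D : Type u₂} [Category.{v₂} D]
    (P : Cᵒᵖ ⥤ BoolAlg.{w}) (R : Dᵒᵖ ⥤ BoolAlg.{w}) where
  functor : C ⥤ D
  preserves : PreservesFiniteProducts functor
  trans : P ⟶ functor.op ⋙ R

/-- Composition of Boolean doctrine morphisms. -/
def DoctrineHom.comp {C : Type u₁} [Category.{v₁} C] {D : Type u₂} [Category.{v₂} D]
    {E : Type u₃} [Category.{v₃} E]
    {P : Cᵒᵖ ⥤ BoolAlg.{w}} {R : Dᵒᵖ ⥤ BoolAlg.{w}} {S : Eᵒᵖ ⥤ BoolAlg.{w}}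
    (Φ : DoctrineHom P R) (Ψ : DoctrineHom R S) : DoctrineHom P S where
  functor := Φ.functor ⋙ Ψ.functor
  preserves := by
    have := Φ.preserves; have := Ψ.preserves
    infer_instance
  trans := Φ.trans ≫ Functor.whiskerLeft Φ.functor.op Ψ.trans

/-- A first-order structure on a Boolean doctrine: fiberwise right adjoints to reindexing
along first projections, satisfying the Beck–Chevalley condition. -/
structure FOStructure {C : Type u₁} [Category.{v₁} C] [HasFiniteProducts C]
    (P : Cᵒᵖ ⥤ BoolAlg.{w}) where
  fa : ∀ X Y : C, P.obj (op (X ⨯ Y)) → P.obj (op X)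
  adj : ∀ (X Y : C) (α : P.obj (op X)) (β : P.obj (op (X ⨯ Y))),
      α ≤ fa X Y β ↔ P.map (prod.fst : X ⨯ Y ⟶ X).op α ≤ β
  bc : ∀ (X X' Y : C) (f : X' ⟶ X) (β : P.obj (op (X ⨯ Y))),
      P.map f.op (fa X Y β) = fa X' Y (P.map (prod.map f (𝟙 Y)).op β)

/-- The existential quantifier `∃ = ¬∀¬` associated to a first-order structure. -/
noncomputable def FOStructure.ex {C : Type u₁} [Category.{v₁} C] [HasFiniteProducts C]
    {P : Cᵒᵖ ⥤ BoolAlg.{w}} (fo : FOStructure P) (X Y : C)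
    (β : P.obj (op (X ⨯ Y))) : P.obj (op X) :=
  (fo.fa X Y βᶜ)ᶜ

/-- The canonical comparison morphism `M X ⨯ M Y ⟶ M (X ⨯ Y)` of a Boolean doctrine
morphism, inverse to the product comparison morphism. -/
noncomputable def DoctrineHom.prodPair {C : Type u₁} [Category.{v₁} C] [HasFiniteProducts C]
    {D : Type u₂} [Category.{v₂} D] [HasFiniteProducts D]
    {P : Cᵒᵖ ⥤ BoolAlg.{w}} {R : Dᵒᵖ ⥤ BoolAlg.{w}} (Φ : DoctrineHom P R) (X Y : C) :
    (Φ.functor.obj X ⨯ Φ.functor.obj Y) ⟶ Φ.functor.obj (X ⨯ Y) :=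
  letI := Φ.preserves
  (PreservesLimitPair.iso Φ.functor X Y).inv

/-- The image of an element of `P (X ⨯ Y)` in `R (M X ⨯ M Y)`, transported along the
canonical isomorphism `M (X ⨯ Y) ≅ M X ⨯ M Y`. -/
noncomputable def DoctrineHom.transProd {C : Type u₁} [Category.{v₁} C] [HasFiniteProducts C]
    {D : Type u₂} [Category.{v₂} D] [HasFiniteProducts D]
    {P : Cᵒᵖ ⥤ BoolAlg.{w}} {R : Dᵒᵖ ⥤ BoolAlg.{w}} (Φ : DoctrineHom P R) (X Y : C)
    (α : P.obj (op (X ⨯ Y))) : R.obj (op (Φ.functor.obj X ⨯ Φ.functor.obj Y)) :=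
  R.map (Φ.prodPair X Y).op (Φ.trans.app (op (X ⨯ Y)) α)

/-- A Boolean doctrine morphism between first-order Boolean doctrines is first-order when it
commutes with the universal quantifiers. -/
def DoctrineHom.IsFO {C : Type u₁} [Category.{v₁} C] [HasFiniteProducts C]
    {D : Type u₂} [Category.{v₂} D] [HasFiniteProducts D]
    {P : Cᵒᵖ ⥤ BoolAlg.{w}} {R : Dᵒᵖ ⥤ BoolAlg.{w}} (Φ : DoctrineHom P R)
    (foP : FOStructure P) (foR : FOStructure R) : Prop :=
  ∀ (X Y : C) (β : P.obj (op (X ⨯ Y))),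
    (Φ.trans.app (op X) (foP.fa X Y β) : R.obj (op (Φ.functor.obj X))) =
      foR.fa (Φ.functor.obj X) (Φ.functor.obj Y) (Φ.transProd X Y β)

/-- The Boolean doctrine morphism with identity functor part induced by a natural
transformation between two doctrines over the same base. -/
def idDoctrineHom {C : Type u₁} [Category.{v₁} C] {P Q : Cᵒᵖ ⥤ BoolAlg.{w}} (η : P ⟶ Q) :
    DoctrineHom P Q where
  functor := 𝟭 C
  preserves := inferInstance
  trans := η

/-- A quantifier completion of a Boolean doctrine `P`: a first-order Boolean doctrine `Q`
over the same base category together with a Boolean doctrine morphism `(𝟭 C, ι) : P ⟶ Q`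
whose functor part is the identity, such that every Boolean doctrine morphism from `P` to a
first-order Boolean doctrine factors uniquely through it via a first-order Boolean doctrine
morphism. -/
structure QuantifierCompletion.{w', v', u', v₁', u₁'} {C : Type u₁'} [Category.{v₁'} C]
    [HasFiniteProducts C] (P : Cᵒᵖ ⥤ BoolAlg.{w'}) where
  Q : Cᵒᵖ ⥤ BoolAlg.{w'}
  fo : FOStructure Q
  ι : P ⟶ Q
  univ : ∀ {D : Type u'} [Category.{v'} D] [HasFiniteProducts D]
      (R : Dᵒᵖ ⥤ BoolAlg.{w'}) (foR : FOStructure R) (Φ : DoctrineHom P R),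
      ∃! Ψ : DoctrineHom Q R, Ψ.IsFO fo foR ∧ Φ = (idDoctrineHom ι).comp Ψ

/-- A propositional model of a Boolean doctrine: a Boolean doctrine morphism to the
subsets doctrine. -/
abbrev PropModel {C : Type u} [Category.{v} C] (P : Cᵒᵖ ⥤ BoolAlg.{v}) :=
  DoctrineHom P subsetsDoctrine.{v}

/-- The subset of `M X` interpreting an element `α ∈ P X` in a propositional model. -/
def PropModel.interp {C : Type u} [Category.{v} C] {P : Cᵒᵖ ⥤ BoolAlg.{v}}
    (M : PropModel P) {X : C} (α : P.obj (op X)) : Set (M.functor.obj X) :=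
  M.trans.app (op X) α



/-- The object map of a Boolean doctrine morphism. -/
abbrev DoctrineHom.onObj {C : Type u₁} [Category.{v₁} C] {D : Type u₂} [Category.{v₂} D]
    {P : Cᵒᵖ ⥤ BoolAlg.{w}} {R : Dᵒᵖ ⥤ BoolAlg.{w}} (Φ : DoctrineHom P R) (X : C) : D :=
  Φ.functor.obj X

/-- The component at `X` of the natural transformation of a Boolean doctrine morphism,
applied to an element of the fiber. -/
abbrev DoctrineHom.appAt {C : Type u₁} [Category.{v₁} C] {D : Type u₂} [Category.{v₂} D]
    {P : Cᵒᵖ ⥤ BoolAlg.{w}} {R : Dᵒᵖ ⥤ BoolAlg.{w}} (Φ : DoctrineHom P R) (X : C)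
    (a : P.obj (op X)) : R.obj (op (Φ.functor.obj X)) :=
  Φ.trans.app (op X) a

/-!
By Zorn's lemma, `F` extends to a universal filter `G` maximal among those disjoint from `I`.
If `π₁*α₁ ∨ π₂*α₂ ∈ G` but `α₁, α₂ ∉ G`, maximality makes the universal filter generated by
`G` and `αᵢ` meet `I` in some `βᵢ` over `Yᵢ`. Reindexing `π₁*α₁ ∨ π₂*α₂` along the pairings
`⟨f₁ ∘ π₁, f₂ ∘ π₂⟩` of the finitely many maps `fᵢ : Yᵢ ⟶ Xᵢ` witnessing this puts
`π₁*β₁ ∨ π₂*β₂` in `G`, while the product axiom of universal ideals puts it in `I`.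
-/

section UltrafilterLemma

instance (X Y : BoolAlg) : BoundedLatticeHomClass (X ⟶ Y) X Y where
  map_sup f := map_sup f.hom
  map_inf f := map_inf f.hom
  map_top f := map_top f.hom
  map_bot f := map_bot f.hom

namespace IsBAFilter

variable {A : Type*} [BooleanAlgebra A] {S : Set A}

theorem top_mem (hS : IsBAFilter S) : ⊤ ∈ S := hS.1

theorem inf_mem (hS : IsBAFilter S) {a b : A} (ha : a ∈ S) (hb : b ∈ S) : a ⊓ b ∈ S :=
  hS.2.1 a b ha hb

theorem mem_of_le (hS : IsBAFilter S) {a b : A} (ha : a ∈ S) (hab : a ≤ b) : b ∈ S :=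
  hS.2.2 a b ha hab

theorem finset_inf_mem (hS : IsBAFilter S) {ι : Type*} (s : Finset ι) {u : ι → A}
    (hu : ∀ i ∈ s, u i ∈ S) : s.inf u ∈ S :=
  Finset.inf_mem S hS.top_mem (fun _ ha _ hb => hS.inf_mem ha hb) s u hu

end IsBAFilter

variable {C : Type u₁} [Category.{v₁} C] {P : Cᵒᵖ ⥤ BoolAlg.{w}}

theorem map_op_map_op {X Y Z : C} (f : X ⟶ Y) (g : Y ⟶ Z) (a : P.obj (op Z)) :
    P.map f.op (P.map g.op a) = P.map (f ≫ g).op a := by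
  rw [op_comp, P.map_comp]; rfl

/-- For a universal filter `G`, the universal filter generated by `G` and `α`. -/
def adjoinUnivFilter (G : ∀ X : C, Set (P.obj (op X))) {X : C} (α : P.obj (op X)) :
    ∀ Y : C, Set (P.obj (op Y)) := fun Y =>
  {β | ∃ φ ∈ G Y, ∃ s : Finset (Y ⟶ X), φ ⊓ s.inf (fun f => P.map f.op α) ≤ β}

variable {G : ∀ X : C, Set (P.obj (op X))}

theorem subset_adjoinUnivFilter {X : C} (α : P.obj (op X)) (Y : C) :
    G Y ⊆ adjoinUnivFilter G α Y :=
  fun φ hφ => ⟨φ, hφ, ∅, inf_le_left⟩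

theorem mem_adjoinUnivFilter_self {X : C} (hG : IsBAFilter (G X)) (α : P.obj (op X)) :
    α ∈ adjoinUnivFilter G α X :=
  ⟨⊤, hG.top_mem, {𝟙 X}, by simp [Finset.inf_singleton, op_id, P.map_id]⟩

variable [HasFiniteProducts C]

theorem map_lift_fst_sup_snd {Y X₁ X₂ : C} (f₁ : Y ⟶ X₁) (f₂ : Y ⟶ X₂)
    (α₁ : P.obj (op X₁)) (α₂ : P.obj (op X₂)) :
    P.map (prod.lift f₁ f₂).op
        (P.map (prod.fst : X₁ ⨯ X₂ ⟶ X₁).op α₁ ⊔ P.map (prod.snd : X₁ ⨯ X₂ ⟶ X₂).op α₂) =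
      P.map f₁.op α₁ ⊔ P.map f₂.op α₂ := by
  rw [map_sup, map_op_map_op, map_op_map_op, prod.lift_fst, prod.lift_snd]

theorem IsUniversalFilter.adjoin (hG : IsUniversalFilter P G) {X : C} (α : P.obj (op X)) :
    IsUniversalFilter P (adjoinUnivFilter G α) := by
  classical
  refine ⟨?_, fun Y => ⟨subset_adjoinUnivFilter α Y (hG.2 Y).top_mem, ?_, ?_⟩⟩
  · rintro Z Y g β ⟨φ, hφ, s, hle⟩
    refine ⟨P.map g.op φ, hG.1 Z Y g φ hφ, s.image (g ≫ ·), ?_⟩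
    calc P.map g.op φ ⊓ (s.image (g ≫ ·)).inf (fun f => P.map f.op α)
        = P.map g.op (φ ⊓ s.inf fun f => P.map f.op α) := by
          simp only [map_inf, map_finset_inf, Finset.inf_image, Function.comp_def,
            map_op_map_op]
      _ ≤ P.map g.op β := OrderHomClass.mono _ hle
  · rintro a b ⟨φ₁, hφ₁, s₁, h₁⟩ ⟨φ₂, hφ₂, s₂, h₂⟩
    refine ⟨φ₁ ⊓ φ₂, (hG.2 Y).inf_mem hφ₁ hφ₂, s₁ ∪ s₂, ?_⟩
    rw [Finset.inf_union, inf_inf_inf_comm]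
    exact inf_le_inf h₁ h₂
  · rintro a b ⟨φ, hφ, s, h⟩ hab
    exact ⟨φ, hφ, s, h.trans hab⟩

theorem IsUniversalFilter.finset_inf_sup_finset_inf_mem (hG : IsUniversalFilter P G)
    {X₁ X₂ : C} {α₁ : P.obj (op X₁)} {α₂ : P.obj (op X₂)}
    (hα : P.map (prod.fst : X₁ ⨯ X₂ ⟶ X₁).op α₁ ⊔ P.map (prod.snd : X₁ ⨯ X₂ ⟶ X₂).op α₂ ∈
      G (X₁ ⨯ X₂))
    {Y : C} {ι₁ ι₂ : Type*} (s₁ : Finset ι₁) (s₂ : Finset ι₂)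
    (f₁ : ι₁ → (Y ⟶ X₁)) (f₂ : ι₂ → (Y ⟶ X₂)) :
    (s₁.inf fun i => P.map (f₁ i).op α₁) ⊔ (s₂.inf fun j => P.map (f₂ j).op α₂) ∈ G Y := by
  rw [Finset.inf_sup_inf]
  refine (hG.2 Y).finset_inf_mem _ fun i _ => ?_
  rw [← map_lift_fst_sup_snd]
  exact hG.1 _ _ _ _ hα

theorem IsUniversalFilter.fst_sup_snd_mem_of_mem_adjoin (hG : IsUniversalFilter P G)
    {X₁ X₂ : C} {α₁ : P.obj (op X₁)} {α₂ : P.obj (op X₂)}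
    (hα : P.map (prod.fst : X₁ ⨯ X₂ ⟶ X₁).op α₁ ⊔ P.map (prod.snd : X₁ ⨯ X₂ ⟶ X₂).op α₂ ∈
      G (X₁ ⨯ X₂))
    {Y₁ Y₂ : C} {β₁ : P.obj (op Y₁)} {β₂ : P.obj (op Y₂)}
    (hβ₁ : β₁ ∈ adjoinUnivFilter G α₁ Y₁) (hβ₂ : β₂ ∈ adjoinUnivFilter G α₂ Y₂) :
    P.map (prod.fst : Y₁ ⨯ Y₂ ⟶ Y₁).op β₁ ⊔ P.map (prod.snd : Y₁ ⨯ Y₂ ⟶ Y₂).op β₂ ∈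
      G (Y₁ ⨯ Y₂) := by
  obtain ⟨φ₁, hφ₁, s₁, h₁⟩ := hβ₁
  obtain ⟨φ₂, hφ₂, s₂, h₂⟩ := hβ₂
  set p₁ := P.map (prod.fst : Y₁ ⨯ Y₂ ⟶ Y₁).op
  set p₂ := P.map (prod.snd : Y₁ ⨯ Y₂ ⟶ Y₂).op
  set a₁ := s₁.inf fun f => P.map f.op α₁
  set a₂ := s₂.inf fun f => P.map f.op α₂
  have hφ : p₁ φ₁ ⊓ p₂ φ₂ ∈ G (Y₁ ⨯ Y₂) :=
    (hG.2 _).inf_mem (hG.1 _ _ _ _ hφ₁) (hG.1 _ _ _ _ hφ₂)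
  have ha : p₁ a₁ ⊔ p₂ a₂ ∈ G (Y₁ ⨯ Y₂) := by
    simp only [p₁, p₂, a₁, a₂, map_finset_inf, Function.comp_def, map_op_map_op]
    exact hG.finset_inf_sup_finset_inf_mem hα s₁ s₂ _ _
  refine (hG.2 _).mem_of_le ((hG.2 _).inf_mem hφ ha) ?_
  calc p₁ φ₁ ⊓ p₂ φ₂ ⊓ (p₁ a₁ ⊔ p₂ a₂)
      ≤ p₁ φ₁ ⊓ p₁ a₁ ⊔ p₂ φ₂ ⊓ p₂ a₂ := by
        rw [inf_sup_left]
        exact sup_le_sup (inf_le_inf_right _ inf_le_left) (inf_le_inf_right _ inf_le_right)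
    _ ≤ p₁ β₁ ⊔ p₂ β₂ := by
        rw [← map_inf, ← map_inf]
        exact sup_le_sup (OrderHomClass.mono _ h₁) (OrderHomClass.mono _ h₂)

def disjointUnivFilters (I : ∀ X : C, Set (P.obj (op X))) : Set (∀ X : C, Set (P.obj (op X))) :=
  {G | IsUniversalFilter P G ∧ ∀ X, G X ∩ I X = ∅}

variable {I : ∀ X : C, Set (P.obj (op X))}

theorem exists_le_maximal_disjointUnivFilters (hG : G ∈ disjointUnivFilters I) :
    ∃ H, G ≤ H ∧ Maximal (· ∈ disjointUnivFilters I) H := by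
  refine zorn_le_nonempty₀ _ (fun c hc hchain K hK => ?_) G hG
  refine ⟨fun X => {a | ∃ H ∈ c, a ∈ H X}, ⟨⟨?_, fun X => ⟨?_, ?_, ?_⟩⟩, ?_⟩,
    fun H hH X a ha => ⟨H, hH, ha⟩⟩
  · rintro X Y f α ⟨H, hH, hα⟩
    exact ⟨H, hH, (hc hH).1.1 X Y f α hα⟩
  · exact ⟨K, hK, ((hc hK).1.2 X).top_mem⟩
  · rintro a b ⟨H₁, hH₁, ha⟩ ⟨H₂, hH₂, hb⟩
    rcases hchain.total hH₁ hH₂ with h | h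
    · exact ⟨H₂, hH₂, ((hc hH₂).1.2 X).inf_mem (h X ha) hb⟩
    · exact ⟨H₁, hH₁, ((hc hH₁).1.2 X).inf_mem ha (h X hb)⟩
  · rintro a b ⟨H, hH, ha⟩ hab
    exact ⟨H, hH, ((hc hH).1.2 X).mem_of_le ha hab⟩
  · refine fun X => Set.eq_empty_iff_forall_notMem.mpr ?_
    rintro a ⟨⟨H, hH, haH⟩, haI⟩
    exact Set.eq_empty_iff_forall_notMem.mp ((hc hH).2 X) a ⟨haH, haI⟩

theorem exists_mem_ideal_of_maximal (hG : Maximal (· ∈ disjointUnivFilters I) G)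
    {X : C} {α : P.obj (op X)} (hα : α ∉ G X) :
    ∃ Y, ∃ β ∈ I Y, β ∈ adjoinUnivFilter G α Y := by
  by_contra! h
  have hadj : adjoinUnivFilter G α ∈ disjointUnivFilters I :=
    ⟨hG.prop.1.adjoin α, fun Y => Set.eq_empty_iff_forall_notMem.mpr
      fun β hβ => h Y β hβ.2 hβ.1⟩
  exact hα <|
    hG.2 hadj (subset_adjoinUnivFilter α) X (mem_adjoinUnivFilter_self (hG.prop.1.2 X) α)

theorem isUniversalUltrafilter_of_maximal (hI : IsUniversalIdeal P I)
    (hG : Maximal (· ∈ disjointUnivFilters I) G) : IsUniversalUltrafilter P G := by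
  obtain ⟨hGuf, hGI⟩ := hG.prop
  have notMem_of_mem_ideal {X : C} {β : P.obj (op X)} (hβ : β ∈ I X) : β ∉ G X :=
    fun hβG => Set.eq_empty_iff_forall_notMem.mp (hGI X) β ⟨hβG, hβ⟩
  refine ⟨hGuf.1, hGuf.2, fun X₁ X₂ α₁ α₂ hα => ?_, notMem_of_mem_ideal hI.2.2.2⟩
  by_contra! h
  obtain ⟨Y₁, β₁, hβ₁I, hβ₁⟩ := exists_mem_ideal_of_maximal hG h.1
  obtain ⟨Y₂, β₂, hβ₂I, hβ₂⟩ := exists_mem_ideal_of_maximal hG h.2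
  exact notMem_of_mem_ideal (hI.2.2.1 _ _ _ _ hβ₁I hβ₂I)
    (hGuf.fst_sup_snd_mem_of_mem_adjoin hα hβ₁ hβ₂)

end UltrafilterLemma

theorem stmt1 {C : Type u₁} [Category.{v₁} C] [HasFiniteProducts C]
    (P : Cᵒᵖ ⥤ BoolAlg.{w}) (F I : ∀ X : C, Set (P.obj (op X)))
    (hF : IsUniversalFilter P F) (hI : IsUniversalIdeal P I)
    (hdisj : ∀ X : C, F X ∩ I X = ∅) :
    ∃ G : ∀ X : C, Set (P.obj (op X)),
      IsUniversalUltrafilter P G ∧ (∀ X : C, F X ⊆ G X) ∧ ∀ X : C, G X ∩ I X = ∅ := by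
  obtain ⟨G, hFG, hG⟩ := exists_le_maximal_disjointUnivFilters (I := I) ⟨hF, hdisj⟩
  exact ⟨G, isUniversalUltrafilter_of_maximal hI hG, hFG, hG.prop.2⟩

end BooleanDoctrine
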